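/- Let Σ ⊆ ℝⁿ be a compact set with ℋ^m(Σ) < ∞ such that there exist R > 0 and C > 0 with β̄_m(x,r) ≤ C·r for every x ∈ Σ and every r ∈ (0,R]. Then the discrete curvature K is uniformly bounded on Σ^{m+2}, i.e. sup{ K(x₀,…,x_{m+1}) : x₀,…,x_{m+1} ∈ Σ } < ∞, and consequently the p-energy E_p(Σ) is finite for every p > 0. -/

import Mathlib

open Metric MeasureTheory Filter
open scoped RealInnerProductSpace ENNReal NNReal

noncomputable section

abbrev Euc (n : ℕ) := EuclideanSpace ℝ (Fin n)

variable {n : ℕ}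

/-- Orthogonal projection onto a subspace, as a continuous linear map on the whole space. -/
noncomputable def projCLM (U : Submodule ℝ (Euc n)) : Euc n →L[ℝ] Euc n :=
  U.subtypeL.comp U.orthogonalProjectionOnto

/-- Orthogonal projection onto the orthogonal complement. -/
noncomputable def QCLM (U : Submodule ℝ (Euc n)) : Euc n →L[ℝ] Euc n :=
  projCLM Uᗮ

/-- The metric on the Grassmannian: operator norm distance of orthogonal projections. -/
noncomputable def dG (U V : Submodule ℝ (Euc n)) : ℝ :=
  ‖projCLM U - projCLM V‖

/-- The cone with axis `Hᗮ` and "angle" `δ`. -/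
def angCone (δ : ℝ) (H : Submodule ℝ (Euc n)) : Set (Euc n) :=
  {x | δ * ‖x‖ ≤ ‖QCLM H x‖}

/-- The shell (n-annulus) of radii `r` and `R`. -/
def shell (r R : ℝ) : Set (Euc n) :=
  Metric.ball (0 : Euc n) R \ Metric.closedBall (0 : Euc n) r

/-- Conical cap: intersection of a cone and a shell. -/
def conicalCap (δ : ℝ) (H : Submodule ℝ (Euc n)) (r R : ℝ) : Set (Euc n) :=
  angCone δ H ∩ shell r R

/-- Symmetrized Hausdorff-type distance: sum of the two one-sided deviations. -/
noncomputable def hDistSum (A B : Set (Euc n)) : ℝ :=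
  (⨆ y : A, Metric.infDist (y : Euc n) B) + (⨆ y : B, Metric.infDist (y : Euc n) A)

/-- Jones β-number (closed-ball version). -/
noncomputable def betaBar (m : ℕ) (S : Set (Euc n)) (x : Euc n) (r : ℝ) : ℝ :=
  (1/r) * ⨅ H : {H : Submodule ℝ (Euc n) // Module.finrank ℝ H = m},
    ⨆ z : ↥(S ∩ Metric.closedBall x r), ‖QCLM H.1 ((z : Euc n) - x)‖

/-- Jones β-number (open-ball version). -/
noncomputable def betaOpen (m : ℕ) (S : Set (Euc n)) (x : Euc n) (r : ℝ) : ℝ :=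
  (1/r) * ⨅ H : {H : Submodule ℝ (Euc n) // Module.finrank ℝ H = m},
    ⨆ z : ↥(S ∩ Metric.ball x r), ‖QCLM H.1 ((z : Euc n) - x)‖

/-- Reifenberg θ-number (closed-ball version). -/
noncomputable def thetaBar (m : ℕ) (S : Set (Euc n)) (x : Euc n) (r : ℝ) : ℝ :=
  (1/r) * ⨅ H : {H : Submodule ℝ (Euc n) // Module.finrank ℝ H = m},
    hDistSum (S ∩ Metric.closedBall x r)
      ((fun v => x + v) '' (H.1 : Set (Euc n)) ∩ Metric.closedBall x r)

/-- Reifenberg θ-number (open-ball version). -/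
noncomputable def thetaOpen (m : ℕ) (S : Set (Euc n)) (x : Euc n) (r : ℝ) : ℝ :=
  (1/r) * ⨅ H : {H : Submodule ℝ (Euc n) // Module.finrank ℝ H = m},
    hDistSum (S ∩ Metric.ball x r)
      ((fun v => x + v) '' (H.1 : Set (Euc n)) ∩ Metric.ball x r)

/-- Discrete Menger-type curvature of an `(m+2)`-tuple of points. -/
noncomputable def discCurv (m : ℕ) (x : Fin (m+2) → Euc n) : ℝ :=
  (μH[((m : ℝ) + 1)] (convexHull ℝ (Set.range x))).toReal / Metric.diam (Set.range x) ^ (m+2)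

/-- Iterated lower integral over `k` copies of a measure. -/
noncomputable def multiLIntegral (μ : Measure (Euc n)) :
    (k : ℕ) → ((Fin k → Euc n) → ℝ≥0∞) → ℝ≥0∞
  | 0, f => f Fin.elim0
  | k+1, f => ∫⁻ x, multiLIntegral μ k (fun v => f (Fin.cons x v)) ∂μ

/-- The `p`-energy of a set: the integral of `K^p` over `(m+2)`-tuples of points of `S`,
with respect to the `m`-dimensional Hausdorff measure restricted to `S`. -/
noncomputable def energy (m : ℕ) (p : ℝ) (S : Set (Euc n)) : ℝ≥0∞ :=
  multiLIntegral ((μH[(m : ℝ)]).restrict S) (m+2) fun x => ENNReal.ofReal (discCurv m x ^ p)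

/-- The class `V_k(η,d)` of `(η,d)`-voluminous `(k+1)`-simplices. -/
def IsVol (k : ℕ) (η d : ℝ) (x : Fin (k+2) → Euc n) : Prop :=
  (∃ c : Euc n, convexHull ℝ (Set.range x) ⊆ Metric.closedBall c d) ∧
  ENNReal.ofReal ((η * d) ^ k) ≤
    μH[(k : ℝ)] (convexHull ℝ (Set.range fun i : Fin (k+1) => x i.castSucc)) ∧
  η * d ≤ Metric.infDist (x (Fin.last (k+1)))
    (affineSpan ℝ (Set.range fun i : Fin (k+1) => x i.castSucc) : Set (Euc n))

/-- Pseudo-distance between two simplices given by vertex tuples. -/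
noncomputable def simplexDist (k : ℕ) (x y : Fin (k+2) → Euc n) : ℝ :=
  ⨅ σ : Equiv.Perm (Fin (k+2)), ⨆ i, dist (x i) (y (σ i))

/-- Best approximating `m`-planes for `S` in the closed ball `B̄(x,r)`. -/
def BAP (m : ℕ) (S : Set (Euc n)) (x : Euc n) (r : ℝ) : Set (Submodule ℝ (Euc n)) :=
  {H | Module.finrank ℝ H = m ∧
    hDistSum (S ∩ Metric.closedBall x r)
      ((fun v => x + v) '' (H : Set (Euc n)) ∩ Metric.closedBall x r) ≤ r * thetaBar m S x r}

/-- `m`-fine sets with constants `A`, `R`, `M`. -/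
def IsFine (m : ℕ) (S : Set (Euc n)) (A R M : ℝ) : Prop :=
  IsCompact S ∧ 0 < A ∧ 0 < R ∧ 2 ≤ M ∧
  (∀ x ∈ S, ∀ r : ℝ, 0 < r → r ≤ R →
    ENNReal.ofReal (A * r ^ m) ≤ μH[(m : ℝ)] (S ∩ Metric.ball x r)) ∧
  (∀ x ∈ S, ∀ r : ℝ, 0 < r → r ≤ R → thetaBar m S x r ≤ M * betaBar m S x r)

/-- `T` is the (m-dimensional) tangent plane of `S` at `x`: the limit in the Grassmannian
metric of best approximating planes as the scale tends to `0`. -/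
def IsTangentAt (m : ℕ) (S : Set (Euc n)) (x : Euc n) (T : Submodule ℝ (Euc n)) : Prop :=
  Module.finrank ℝ T = m ∧
  ∀ ε > 0, ∃ r₀ > 0, ∀ r : ℝ, 0 < r → r ≤ r₀ → ∀ H ∈ BAP m S x r, dG T H ≤ ε

/-!
At the scale `r = diam {x₀, …, x_{m+1}} ≤ R`, the bound `β̄_m(x₀, r) ≤ C r` puts every vertex
within `2 C r²` of an `m`-plane `H` through `x₀`. The vertices lie in an affine `(m+1)`-plane
`x₀ + W`, and `W` contains a unit vector `w ⊥ H`. In an orthonormal basis of `W` ending with `w`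
the simplex lies in a box with `m` sides of length `2r` and one side of length `4 C r²`, so its
`(m+1)`-measure is `O(C r^{m+2})` and `K = O(C)`. Simplices of diameter `> R` satisfy the trivial
bound `K = O(1 / R)`. A bounded integrand then has finite energy since `ℋ^m(Σ) < ∞`.
-/

open Module Set

theorem Submodule.exists_le_and_finrank_eq {K V : Type*} [DivisionRing K] [AddCommGroup V]
    [Module K V] [FiniteDimensional K V] (N : Submodule K V) {k : ℕ} (hN : finrank K N ≤ k)
    (hk : k ≤ finrank K V) : ∃ W : Submodule K V, N ≤ W ∧ finrank K W = k := by
  induction k with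
  | zero => exact ⟨N, le_rfl, Nat.le_zero.mp hN⟩
  | succ k ih =>
    rcases hN.eq_or_lt with hN | hN
    · exact ⟨N, le_rfl, hN⟩
    obtain ⟨W, hNW, hW⟩ := ih (by omega) (by omega)
    obtain ⟨v, hv⟩ := W.exists_of_finrank_lt (by omega)
    refine ⟨W ⊔ K ∙ v, hNW.trans le_sup_left, ?_⟩
    rw [Submodule.finrank_sup_span_singleton (by simpa using hv 1 one_ne_zero), hW]

theorem Submodule.exists_finrank_eq {K V : Type*} [DivisionRing K] [AddCommGroup V] [Module K V]
    [FiniteDimensional K V] {k : ℕ} (hk : k ≤ finrank K V) :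
    ∃ W : Submodule K V, finrank K W = k :=
  let ⟨W, _, hW⟩ := (⊥ : Submodule K V).exists_le_and_finrank_eq (by simp) hk
  ⟨W, hW⟩

theorem norm_sub_le_diam_range {ι E : Type*} [Finite ι] [SeminormedAddCommGroup E] (x : ι → E)
    (i j : ι) : ‖x i - x j‖ ≤ diam (range x) := by
  rw [← dist_eq_norm]
  exact dist_le_diam_of_mem (finite_range x).isBounded (mem_range_self i) (mem_range_self j)

section InnerProductSpace

variable {E : Type*} [NormedAddCommGroup E] [InnerProductSpace ℝ E]

theorem Submodule.exists_mem_orthogonal_norm_eq_one [FiniteDimensional ℝ E]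
    {H W : Submodule ℝ E} (h : finrank ℝ H < finrank ℝ W) : ∃ w ∈ W, w ∈ Hᗮ ∧ ‖w‖ = 1 := by
  have hH := H.finrank_add_finrank_orthogonal
  have hsup := (W ⊔ Hᗮ).finrank_le
  have hinf := Submodule.finrank_sup_add_finrank_inf_eq W Hᗮ
  have hne : W ⊓ Hᗮ ≠ ⊥ := by
    intro hbot
    rw [hbot, finrank_bot] at hinf
    omega
  obtain ⟨w, hw, hw0⟩ := Submodule.exists_mem_ne_zero_of_ne_bot hne
  exact ⟨‖w‖⁻¹ • w, W.smul_mem _ hw.1, Hᗮ.smul_mem _ hw.2, norm_smul_inv_norm hw0⟩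

theorem Submodule.inner_starProjection_eq_of_mem {K : Submodule ℝ E} [K.HasOrthogonalProjection]
    {w : E} (hw : w ∈ K) (v : E) : ⟪w, K.starProjection v⟫ = ⟪w, v⟫ := by
  rw [← K.inner_starProjection_left_eq_right, K.starProjection_eq_self_iff.mpr hw]

theorem Submodule.exists_orthonormal_span_eq_and_last_eq {W : Submodule ℝ E} {k : ℕ}
    (hW : finrank ℝ W = k + 1) {w : E} (hwW : w ∈ W) (hw : ‖w‖ = 1) :
    ∃ u : Fin (k + 1) → E, Orthonormal ℝ u ∧ span ℝ (range u) = W ∧ u (Fin.last k) = w := by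
  have : FiniteDimensional ℝ W := .of_finrank_eq_succ hW
  have hw' : Orthonormal ℝ (({Fin.last k} : Set (Fin (k + 1))).domRestrict
      fun _ => (⟨w, hwW⟩ : W)) :=
    ⟨fun _ => hw, fun i j hij => (hij (Subsingleton.elim i j)).elim⟩
  obtain ⟨b, hb⟩ := hw'.exists_orthonormalBasis_extension_of_card_eq (by simpa using hW)
  refine ⟨W.subtype ∘ b, b.orthonormal.comp_linearIsometry W.subtypeₗᵢ, ?_, by simp [hb _ rfl]⟩
  rw [range_comp, Submodule.span_image, ← b.coe_toBasis, b.toBasis.span_eq,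
    Submodule.map_subtype_top]

theorem Orthonormal.lipschitzWith_add_sum_smul {k : ℕ} {u : Fin k → E} (hu : Orthonormal ℝ u)
    (p : E) : LipschitzWith k fun c : Fin k → ℝ => p + ∑ i, c i • u i := by
  refine LipschitzWith.of_dist_le_mul fun a b => ?_
  rw [dist_eq_norm, add_sub_add_left_eq_sub, ← Finset.sum_sub_distrib]
  calc ‖∑ i, (a i • u i - b i • u i)‖ ≤ ∑ i, ‖(a i - b i) • u i‖ := by
        simpa only [sub_smul] using norm_sum_le _ _
    _ ≤ ∑ _i : Fin k, dist a b := Finset.sum_le_sum fun i _ => by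
        rw [norm_smul, hu.1 i, mul_one, ← dist_eq_norm]
        exact dist_le_pi_dist a b i
    _ = k * dist a b := by simp

theorem Orthonormal.hausdorffMeasure_le_of_abs_inner_le [MeasurableSpace E] [BorelSpace E]
    {k : ℕ} {u : Fin k → E} (hu : Orthonormal ℝ u) (p : E) {r : Fin k → ℝ} (hr : ∀ i, 0 ≤ r i)
    {s : Set E} (hspan : ∀ z ∈ s, z - p ∈ Submodule.span ℝ (range u))
    (hbox : ∀ z ∈ s, ∀ i, |⟪u i, z - p⟫| ≤ r i) :
    μH[k] s ≤ ENNReal.ofReal (k ^ k * ∏ i, 2 * r i) := by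
  set box : Set (Fin k → ℝ) := univ.pi fun i => Icc (-r i) (r i)
  have hs : s ⊆ (fun c : Fin k → ℝ => p + ∑ i, c i • u i) '' box := by
    intro z hz
    obtain ⟨a, ha⟩ := Submodule.mem_span_range_iff_exists_fun ℝ |>.mp (hspan z hz)
    have hcoord : ∀ j, ⟪u j, z - p⟫ = a j := fun j => by
      rw [← ha]; exact hu.inner_right_fintype a j
    refine ⟨fun i => ⟪u i, z - p⟫, fun i _ => abs_le.mp (hbox z hz i), ?_⟩
    simp only [hcoord, ha, add_sub_cancel]
  have hvol : μH[k] box = ENNReal.ofReal (∏ i, 2 * r i) := by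
    have : (μH[k] : Measure (Fin k → ℝ)) = volume := by
      simpa using hausdorffMeasure_pi_real (ι := Fin k)
    rw [this, volume_pi_pi, ENNReal.ofReal_prod_of_nonneg fun i _ => by linarith [hr i]]
    simp only [Real.volume_Icc, sub_neg_eq_add, two_mul]
  calc μH[k] s ≤ (k : ℝ≥0∞) ^ (k : ℝ) * μH[k] box := by
        simpa using (measure_mono hs).trans
          ((hu.lipschitzWith_add_sum_smul p).hausdorffMeasure_image_le k.cast_nonneg box)
    _ = ENNReal.ofReal (k ^ k * ∏ i, 2 * r i) := by
        rw [hvol, ENNReal.ofReal_mul (by positivity), ENNReal.rpow_natCast,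
          ENNReal.ofReal_pow k.cast_nonneg, ENNReal.ofReal_natCast]

theorem convex_slab (W : Submodule ℝ E) (w p : E) (d δ : ℝ) :
    Convex ℝ {z | z - p ∈ W ∧ ‖z - p‖ ≤ d ∧ |⟪w, z - p⟫| ≤ δ} := by
  have hW : Convex ℝ {z | z - p ∈ W} := (AffineSubspace.mk' p W).convex
  have hball : Convex ℝ {z | ‖z - p‖ ≤ d} := by
    convert convex_closedBall p d using 1
    ext; simp [dist_eq_norm]
  have hslab : Convex ℝ {z | |⟪w, z - p⟫| ≤ δ} := by
    convert (convex_closedBall ⟪w, p⟫ δ).linear_preimage (innerₛₗ ℝ w) using 1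
    ext; simp [Real.dist_eq, inner_sub_right]
  exact hW.inter (hball.inter hslab)

theorem hausdorffMeasure_le_of_subset_slab [MeasurableSpace E] [BorelSpace E] {k : ℕ}
    {W : Submodule ℝ E} (hW : finrank ℝ W = k + 1) {w : E} (hwW : w ∈ W) (hw : ‖w‖ = 1) (p : E)
    {d δ : ℝ} (hd : 0 ≤ d) (hδ : 0 ≤ δ) {s : Set E}
    (hs : s ⊆ {z | z - p ∈ W ∧ ‖z - p‖ ≤ d ∧ |⟪w, z - p⟫| ≤ δ}) :
    μH[(k : ℝ) + 1] s ≤ ENNReal.ofReal ((k + 1) ^ (k + 1) * ((2 * d) ^ k * (2 * δ))) := by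
  obtain ⟨u, hu, hspan, hlast⟩ := W.exists_orthonormal_span_eq_and_last_eq hW hwW hw
  have hbox : ∀ z ∈ s, ∀ i, |⟪u i, z - p⟫| ≤ Fin.lastCases δ (fun _ => d) i := by
    intro z hz i
    induction i using Fin.lastCases with
    | last => simpa [hlast] using (hs hz).2.2
    | cast j =>
      rw [Fin.lastCases_castSucc]
      calc |⟪u j.castSucc, z - p⟫| ≤ ‖u j.castSucc‖ * ‖z - p‖ := abs_real_inner_le_norm _ _
        _ ≤ d := by rw [hu.1, one_mul]; exact (hs hz).2.1
  have := hu.hausdorffMeasure_le_of_abs_inner_le p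
    (fun i => by induction i using Fin.lastCases <;> simp [hd, hδ])
    (fun z hz => hspan ▸ (hs hz).1) hbox
  simpa [Fin.prod_univ_castSucc, mul_comm] using this

theorem hausdorffMeasure_convexHull_le [FiniteDimensional ℝ E] [MeasurableSpace E]
    [BorelSpace E] {m : ℕ} (hm : m < finrank ℝ E) {H : Submodule ℝ E} (hH : finrank ℝ H = m)
    (x : Fin (m + 2) → E) {d δ : ℝ} (hx : ∀ i, ‖x i - x 0‖ ≤ d)
    (hQ : ∀ i, ‖Hᗮ.starProjection (x i - x 0)‖ ≤ δ) :
    μH[(m : ℝ) + 1] (convexHull ℝ (range x)) ≤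
      ENNReal.ofReal ((m + 1) ^ (m + 1) * ((2 * d) ^ m * (2 * δ))) := by
  obtain ⟨W, hVW, hW⟩ := (vectorSpan ℝ (range x)).exists_le_and_finrank_eq
    (finrank_vectorSpan_range_le ℝ x (Fintype.card_fin _)) hm
  obtain ⟨w, hwW, hwH, hw⟩ := Submodule.exists_mem_orthogonal_norm_eq_one (H := H) (W := W)
    (by omega)
  refine hausdorffMeasure_le_of_subset_slab hW hwW hw (x 0) (by simpa using hx 0)
    ((norm_nonneg _).trans (hQ 0)) (convexHull_min ?_ (convex_slab W w (x 0) d δ))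
  rintro - ⟨i, rfl⟩
  refine ⟨hVW (vsub_mem_vectorSpan ℝ (mem_range_self i) (mem_range_self 0)), hx i, ?_⟩
  rw [← Hᗮ.inner_starProjection_eq_of_mem hwH]
  exact (abs_real_inner_le_norm _ _).trans (by simpa [hw] using hQ i)

end InnerProductSpace

theorem norm_QCLM_apply_le (H : Submodule ℝ (Euc n)) (v : Euc n) : ‖QCLM H v‖ ≤ ‖v‖ :=
  Hᗮ.norm_starProjection_apply_le v

theorem discCurv_nonneg (m : ℕ) (x : Fin (m + 2) → Euc n) : 0 ≤ discCurv m x := by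
  unfold discCurv; positivity

theorem discCurv_le_of_forall_norm_QCLM_le {m : ℕ} (hmn : m < n) {H : Submodule ℝ (Euc n)}
    (hH : finrank ℝ H = m) (x : Fin (m + 2) → Euc n) {δ : ℝ}
    (hQ : ∀ i, ‖QCLM H (x i - x 0)‖ ≤ δ) :
    discCurv m x ≤ (m + 1) ^ (m + 1) * 2 ^ (m + 1) * δ / diam (range x) ^ 2 := by
  set d := diam (range x)
  have hδ : 0 ≤ δ := (norm_nonneg _).trans (hQ 0)
  rcases (diam_nonneg : 0 ≤ d).eq_or_lt with hd | (hd : 0 < d)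
  · simp [discCurv, d, ← hd]
  have hμ := hausdorffMeasure_convexHull_le (by simpa using hmn) hH x
    (fun i => norm_sub_le_diam_range x i 0) hQ
  rw [discCurv, div_le_div_iff₀ (by positivity) (by positivity)]
  calc (μH[(m : ℝ) + 1] (convexHull ℝ (range x))).toReal * d ^ 2
      ≤ (m + 1) ^ (m + 1) * ((2 * d) ^ m * (2 * δ)) * d ^ 2 := by
        gcongr
        exact ENNReal.toReal_le_of_le_ofReal (by positivity) hμ
    _ = (m + 1) ^ (m + 1) * 2 ^ (m + 1) * δ * d ^ (m + 2) := by ring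

theorem exists_forall_norm_QCLM_le_of_betaBar_lt {m : ℕ} (hmn : m ≤ n) {S : Set (Euc n)}
    {x : Euc n} {r t : ℝ} (hr : 0 < r) (h : betaBar m S x r < t) :
    ∃ H : Submodule ℝ (Euc n), finrank ℝ H = m ∧
      ∀ z ∈ S ∩ closedBall x r, ‖QCLM H (z - x)‖ ≤ r * t := by
  obtain ⟨H₀, hH₀⟩ := Submodule.exists_finrank_eq (K := ℝ) (V := Euc n) (by simpa using hmn)
  have : Nonempty {H : Submodule ℝ (Euc n) // finrank ℝ H = m} := ⟨⟨H₀, hH₀⟩⟩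
  rw [betaBar, one_div, inv_mul_lt_iff₀ hr] at h
  obtain ⟨⟨H, hH⟩, hlt⟩ := exists_lt_of_ciInf_lt h
  have hbdd : BddAbove (range fun z : ↥(S ∩ closedBall x r) => ‖QCLM H (z - x)‖) := by
    refine ⟨r, ?_⟩
    rintro - ⟨z, rfl⟩
    exact (norm_QCLM_apply_le _ _).trans (by simpa [dist_eq_norm] using z.2.2)
  exact ⟨H, hH, fun z hz => (le_ciSup hbdd ⟨z, hz⟩).trans hlt.le⟩

theorem discCurv_le_of_betaBar_le {m : ℕ} (hmn : m < n) {S : Set (Euc n)} {R C : ℝ}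
    (hR : 0 < R) (hC : 0 < C)
    (hβ : ∀ x ∈ S, ∀ r : ℝ, 0 < r → r ≤ R → betaBar m S x r ≤ C * r)
    {x : Fin (m + 2) → Euc n} (hx : ∀ i, x i ∈ S) :
    discCurv m x ≤
      max (2 * C * ((m + 1) ^ (m + 1) * 2 ^ (m + 1))) ((m + 1) ^ (m + 1) * 2 ^ (m + 1) / R) := by
  set c : ℝ := (m + 1) ^ (m + 1) * 2 ^ (m + 1)
  set d := diam (range x)
  have hxd : ∀ i, ‖x i - x 0‖ ≤ d := fun i => norm_sub_le_diam_range x i 0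
  rcases (diam_nonneg : 0 ≤ d).eq_or_lt with hd | (hd : 0 < d)
  · rw [discCurv, ← hd, zero_pow (by omega), div_zero]
    positivity
  by_cases hdR : d ≤ R
  · obtain ⟨H, hH, hQ⟩ := exists_forall_norm_QCLM_le_of_betaBar_lt hmn.le hd
      ((hβ _ (hx 0) d hd hdR).trans_lt (by nlinarith : C * d < 2 * C * d))
    calc discCurv m x ≤ c * (d * (2 * C * d)) / d ^ 2 :=
          discCurv_le_of_forall_norm_QCLM_le hmn hH x fun i =>
            hQ (x i) ⟨hx i, by simpa [dist_eq_norm] using hxd i⟩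
      _ = 2 * C * c := by field_simp
      _ ≤ _ := le_max_left _ _
  · obtain ⟨H, hH⟩ := Submodule.exists_finrank_eq (K := ℝ) (V := Euc n) (by simpa using hmn.le)
    calc discCurv m x ≤ c * d / d ^ 2 :=
          discCurv_le_of_forall_norm_QCLM_le hmn hH x fun i =>
            (norm_QCLM_apply_le _ _).trans (hxd i)
      _ = c / d := by field_simp
      _ ≤ c / R := by gcongr; linarith
      _ ≤ _ := le_max_right _ _

theorem multiLIntegral_restrict_le (μ : Measure (Euc n)) {S : Set (Euc n)} (hS : MeasurableSet S)
    {c : ℝ≥0∞} {k : ℕ} {f : (Fin k → Euc n) → ℝ≥0∞} (hf : ∀ v, (∀ i, v i ∈ S) → f v ≤ c) :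
    multiLIntegral (μ.restrict S) k f ≤ c * μ S ^ k := by
  induction k with
  | zero => simpa [multiLIntegral] using hf Fin.elim0 fun i => i.elim0
  | succ k ih =>
    calc multiLIntegral (μ.restrict S) (k + 1) f ≤ ∫⁻ _, c * μ S ^ k ∂μ.restrict S :=
          lintegral_mono_ae <| (ae_restrict_mem hS).mono fun y hy =>
            ih fun v hv => hf _ (Fin.forall_fin_succ.mpr ⟨by simpa using hy, by simpa using hv⟩)
      _ = c * μ S ^ (k + 1) := by
          rw [lintegral_const, Measure.restrict_apply_univ, pow_succ, mul_assoc]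

theorem energy_lt_top_of_discCurv_le {m : ℕ} {p B : ℝ} (hp : 0 ≤ p) {S : Set (Euc n)}
    (hS : MeasurableSet S) (hfin : μH[(m : ℝ)] S < ⊤)
    (hB : ∀ x : Fin (m + 2) → Euc n, (∀ i, x i ∈ S) → discCurv m x ≤ B) : energy m p S < ⊤ :=
  (multiLIntegral_restrict_le _ hS fun x hx => ENNReal.ofReal_le_ofReal
    (Real.rpow_le_rpow (discCurv_nonneg m x) (hB x hx) hp)).trans_lt
      (ENNReal.mul_lt_top ENNReal.ofReal_lt_top (ENNReal.pow_lt_top hfin))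

theorem statement10_general (n m : ℕ) (hmn : m < n)
    (S : Set (Euc n)) (hcpt : IsCompact S) (hfin : μH[(m : ℝ)] S < ⊤)
    (hβ : ∃ R > (0:ℝ), ∃ C > (0:ℝ), ∀ x ∈ S, ∀ r : ℝ, 0 < r → r ≤ R →
      betaBar m S x r ≤ C * r) :
    (∃ B : ℝ, ∀ x : Fin (m+2) → Euc n, (∀ i, x i ∈ S) → discCurv m x ≤ B) ∧
    (∀ p : ℝ, 0 < p → energy m p S < ⊤) := by
  obtain ⟨R, hR, C, hC, hβ⟩ := hβ
  have hK := fun (x : Fin (m + 2) → Euc n) (hx : ∀ i, x i ∈ S) =>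
    discCurv_le_of_betaBar_le hmn hR hC hβ hx
  exact ⟨⟨_, hK⟩, fun p hp =>
    energy_lt_top_of_discCurv_le hp.le hcpt.isClosed.measurableSet hfin hK⟩

/-- a linear bound on β-numbers implies a uniform curvature bound
and finiteness of the p-energy for every `p > 0`. -/
theorem statement10 (n m : ℕ) (hm : 0 < m) (hmn : m < n)
    (S : Set (Euc n)) (hcpt : IsCompact S) (hfin : μH[(m : ℝ)] S < ⊤)
    (hβ : ∃ R > (0:ℝ), ∃ C > (0:ℝ), ∀ x ∈ S, ∀ r : ℝ, 0 < r → r ≤ R →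
      betaBar m S x r ≤ C * r) :
    (∃ B : ℝ, ∀ x : Fin (m+2) → Euc n, (∀ i, x i ∈ S) → discCurv m x ≤ B) ∧
    (∀ p : ℝ, 0 < p → energy m p S < ⊤) :=
  statement10_general n m hmn S hcpt hfin hβ
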